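/- Every point of the cube [0,R]^3 lies within distance R of at least three of the six face centers of the cube. (That is, the deployment of six sensors of sensing radius R at the face centers 3-covers the entire cube.) -/

import Mathlib

/-!
Along each axis, the face center on the nearer of the two opposite faces differs from the point
by at most `R / 2` in every coordinate, so it lies within distance `√3 · R / 2 ≤ R`. The three
axes give three distinct face centers.
-/

open Real Metric

namespace Cube

variable {n : ℕ}

/-- The center of the face `{x | x i = a}` of the cube `[0, R]^n`, for `a ∈ {0, R}`. -/
noncomputable def faceCenter (R : ℝ) (i : Fin n) (a : ℝ) : EuclideanSpace ℝ (Fin n) :=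
  WithLp.toLp 2 fun j => if j = i then a else R / 2

noncomputable def nearEnd (R x : ℝ) : ℝ := if x ≤ R / 2 then 0 else R

lemma nearEnd_eq_zero_or_eq (R x : ℝ) : nearEnd R x = 0 ∨ nearEnd R x = R := by
  unfold nearEnd; split_ifs <;> simp

lemma nearEnd_ne_half {R : ℝ} (hR : R ≠ 0) (x : ℝ) : nearEnd R x ≠ R / 2 := by
  rcases nearEnd_eq_zero_or_eq R x with h | h <;> rw [h] <;> intro h' <;> apply hR <;> linarith

lemma abs_sub_nearEnd_le {R x : ℝ} (hx : x ∈ Set.Icc 0 R) : |x - nearEnd R x| ≤ R / 2 := by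
  obtain ⟨hx0, hxR⟩ := hx
  unfold nearEnd
  split_ifs <;> rw [abs_le] <;> constructor <;> linarith

lemma abs_sub_half_le {R x : ℝ} (hx : x ∈ Set.Icc 0 R) : |x - R / 2| ≤ R / 2 := by
  obtain ⟨hx0, hxR⟩ := hx
  rw [abs_le]; constructor <;> linarith

lemma dist_le_two_mul_of_forall_abs_sub_le {p c : EuclideanSpace ℝ (Fin n)} {δ : ℝ}
    (hn : n ≤ 4) (hδ : 0 ≤ δ) (h : ∀ j, |p j - c j| ≤ δ) : dist p c ≤ 2 * δ := by
  rw [EuclideanSpace.dist_eq, Real.sqrt_le_left (by positivity)]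
  have hn' : (n : ℝ) ≤ 4 := by exact_mod_cast hn
  calc ∑ j, dist (p j) (c j) ^ 2 ≤ ∑ _j : Fin n, δ ^ 2 := Finset.sum_le_sum fun j _ => by
          rw [Real.dist_eq]; exact pow_le_pow_left₀ (abs_nonneg _) (h j) 2
    _ = n * δ ^ 2 := by simp
    _ ≤ (2 * δ) ^ 2 := by nlinarith [sq_nonneg δ]

lemma dist_faceCenter_nearEnd_le {R : ℝ} {p : EuclideanSpace ℝ (Fin n)} (hn : n ≤ 4)
    (hp : ∀ j, p j ∈ Set.Icc 0 R) (i : Fin n) :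
    dist p (faceCenter R i (nearEnd R (p i))) ≤ R := by
  have hR : 0 ≤ R := (hp i).1.trans (hp i).2
  have hcoord : ∀ j, |p j - faceCenter R i (nearEnd R (p i)) j| ≤ R / 2 := by
    intro j
    by_cases hji : j = i
    · subst hji; simpa [faceCenter] using abs_sub_nearEnd_le (hp j)
    · simpa [faceCenter, hji] using abs_sub_half_le (hp j)
  calc dist p (faceCenter R i (nearEnd R (p i))) ≤ 2 * (R / 2) :=
        dist_le_two_mul_of_forall_abs_sub_le hn (by positivity) hcoord
    _ = R := by ring

lemma eq_of_faceCenter_eq {R a b : ℝ} {i j : Fin n} (ha : a ≠ R / 2)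
    (h : faceCenter R i a = faceCenter R j b) : i = j := by
  by_contra hij
  exact ha (by simpa [faceCenter, hij] using congrArg (· i) h)

lemma faceCenter_nearEnd_injective {R : ℝ} (hR : R ≠ 0) (p : EuclideanSpace ℝ (Fin n)) :
    Function.Injective fun i => faceCenter R i (nearEnd R (p i)) :=
  fun _ _ h => eq_of_faceCenter_eq (nearEnd_ne_half hR _) h

lemma faceCenter_mem_of_eq_zero_or_eq {R a : ℝ} (ha : a = 0 ∨ a = R) (i : Fin 3) :
    faceCenter R i a ∈ ({!₂[R/2, R/2, 0], !₂[R/2, R/2, R], !₂[R/2, 0, R/2],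
        !₂[R/2, R, R/2], !₂[0, R/2, R/2], !₂[R, R/2, R/2]} : Set (EuclideanSpace ℝ (Fin 3))) := by
  fin_cases i <;> rcases ha with rfl | rfl <;> simp [faceCenter, funext_iff, Fin.forall_fin_succ]

end Cube

open Cube in
/-- Every point of the cube `[0,R]^3` lies within distance `R` of at least
three of the six face centers of the cube. -/
theorem sixsoid_three_coverage (R : ℝ) (hR : 0 < R)
    (p : EuclideanSpace ℝ (Fin 3)) (hp : ∀ i, p i ∈ Set.Icc 0 R) :
    3 ≤ Set.ncard {c ∈ ({!₂[R/2, R/2, 0], !₂[R/2, R/2, R], !₂[R/2, 0, R/2],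
        !₂[R/2, R, R/2], !₂[0, R/2, R/2], !₂[R, R/2, R/2]} :
        Set (EuclideanSpace ℝ (Fin 3))) | dist p c ≤ R} := by
  calc 3 = (Set.range fun i => faceCenter R i (nearEnd R (p i))).ncard := by
        rw [Set.ncard_range_of_injective (faceCenter_nearEnd_injective hR.ne' p), Nat.card_fin]
    _ ≤ _ := Set.ncard_le_ncard ?_
  rintro _ ⟨i, rfl⟩
  exact ⟨faceCenter_mem_of_eq_zero_or_eq (nearEnd_eq_zero_or_eq R (p i)) i,
    dist_faceCenter_nearEnd_le (by norm_num) hp i⟩
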